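/- Let X be a random vector in ℝⁿ supported in B(0, r_X) with density p satisfying p(x) ≤ A_X / V_n(B(0, r_X)). Then for any unit vector w ∈ ℝⁿ and threshold θ ∈ (0, r_X), the probability that ⟨w, X⟩ > θ is at most A_X (1 − θ²/r_X²)^{n/2}. -/

import Mathlib

/-!
A point of the ball `‖x‖ ≤ r` with `⟪w, x⟫ > θ ≥ 0` satisfies
`‖x - θ • w‖² = ‖x‖² - 2θ⟪w, x⟫ + θ² ≤ r² - θ²`, so this cap lies in a ball of radius
`√(r² - θ²)`. Since the density is at most `A / vol(B(0, r))` and vanishes off `B(0, r)`,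
the probability of the cap is at most `A` times the volume ratio `(√(r² - θ²) / r)ⁿ`.
-/

open MeasureTheory Metric Module
open scoped RealInnerProductSpace ENNReal

theorem closedBall_inter_setOf_inner_gt_subset {E : Type*} [NormedAddCommGroup E]
    [InnerProductSpace ℝ E] {w : E} (hw : ‖w‖ = 1) {r θ : ℝ} (hθ : 0 ≤ θ) :
    closedBall 0 r ∩ {x | θ < ⟪w, x⟫} ⊆ closedBall (θ • w) (√(r ^ 2 - θ ^ 2)) := by
  rintro x ⟨hx, hθx⟩
  rw [mem_closedBall_zero_iff] at hx
  refine mem_closedBall_iff_norm.mpr (Real.le_sqrt_of_sq_le ?_)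
  rw [norm_sub_sq_real, norm_smul, real_inner_smul_right, real_inner_comm, hw,
    Real.norm_of_nonneg hθ]
  nlinarith [mul_le_mul_of_nonneg_left hθx.le hθ, norm_nonneg x]

theorem withDensity_apply_le_mul_measure_inter {α : Type*} [MeasurableSpace α] {μ : Measure α}
    {p : α → ℝ≥0∞} {s : Set α} (hs : MeasurableSet s) {C : ℝ≥0∞}
    (hsupp : ∀ x, x ∉ s → p x = 0) (hbound : ∀ x, p x ≤ C) (t : Set α) :
    μ.withDensity p t ≤ C * μ (t ∩ s) := by
  have hp : p ≤ s.indicator fun _ ↦ C := fun x ↦ by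
    by_cases hx : x ∈ s
    · simpa [hx] using hbound x
    · simp [hx, hsupp x hx]
  calc μ.withDensity p t ≤ μ.withDensity (s.indicator fun _ ↦ C) t :=
        withDensity_mono (Filter.Eventually.of_forall hp) t
    _ = C * μ (t ∩ s) := by
        rw [withDensity_indicator hs, withDensity_const, Measure.smul_apply,
          Measure.restrict_apply' hs, smul_eq_mul]

theorem addHaar_closedBall_div_addHaar_closedBall {E : Type*} [NormedAddCommGroup E]
    [NormedSpace ℝ E] [MeasurableSpace E] [BorelSpace E] [FiniteDimensional ℝ E]
    (μ : Measure E) [μ.IsAddHaarMeasure] (x y : E) {r ρ : ℝ} (hr : 0 < r) (hρ : 0 ≤ ρ) :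
    μ (closedBall y ρ) / μ (closedBall x r) = ENNReal.ofReal ((ρ / r) ^ finrank ℝ E) := by
  have hball : μ (closedBall x r) = μ (closedBall 0 r) := Measure.addHaar_closedBall_center μ x r
  nth_rw 1 [← div_mul_cancel₀ ρ hr.ne']
  rw [Measure.addHaar_closedBall_mul μ y (div_nonneg hρ hr.le) hr.le,
    hball, ENNReal.mul_div_cancel_right (measure_closedBall_pos μ 0 hr).ne'
      measure_closedBall_lt_top.ne]

theorem false_positive_bound_general (n : ℕ) (rX AX : ℝ)
    (p : EuclideanSpace ℝ (Fin n) → ℝ≥0∞)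
    (μ : Measure (EuclideanSpace ℝ (Fin n)))
    (hμ : μ = volume.withDensity p)
    (hsupp : ∀ x, x ∉ Metric.closedBall (0 : EuclideanSpace ℝ (Fin n)) rX → p x = 0)
    (hbound : ∀ x, p x ≤ ENNReal.ofReal AX /
        volume (Metric.closedBall (0 : EuclideanSpace ℝ (Fin n)) rX))
    (w : EuclideanSpace ℝ (Fin n)) (hw : ‖w‖ = 1)
    (θ : ℝ) (hθ : θ ∈ Set.Ioo 0 rX) :
    μ {x | ⟪w, x⟫ > θ}
      ≤ ENNReal.ofReal (AX * Real.sqrt (1 - θ ^ 2 / rX ^ 2) ^ n) := by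
  obtain ⟨hθ, hθr⟩ := hθ
  have hr : 0 < rX := hθ.trans hθr
  have hsqrt : √(1 - θ ^ 2 / rX ^ 2) = √(rX ^ 2 - θ ^ 2) / rX := by
    rw [← Real.sqrt_sq hr.le, ← Real.sqrt_div' _ (sq_nonneg rX), Real.sqrt_sq hr.le,
      sub_div, div_self (pow_ne_zero 2 hr.ne')]
  calc μ {x | θ < ⟪w, x⟫}
      ≤ ENNReal.ofReal AX / volume (closedBall (0 : EuclideanSpace ℝ (Fin n)) rX) *
          volume ({x | θ < ⟪w, x⟫} ∩ closedBall 0 rX) := by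
        rw [hμ]
        exact withDensity_apply_le_mul_measure_inter measurableSet_closedBall hsupp hbound _
    _ ≤ ENNReal.ofReal AX / volume (closedBall (0 : EuclideanSpace ℝ (Fin n)) rX) *
          volume (closedBall (θ • w) √(rX ^ 2 - θ ^ 2)) := by
        rw [Set.inter_comm]
        gcongr
        exact closedBall_inter_setOf_inner_gt_subset hw hθ.le
    _ = ENNReal.ofReal (AX * √(1 - θ ^ 2 / rX ^ 2) ^ n) := by
        rw [ENNReal.mul_comm_div,
          addHaar_closedBall_div_addHaar_closedBall _ _ _ hr (Real.sqrt_nonneg _),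
          finrank_euclideanSpace_fin, ← ENNReal.ofReal_mul' (by positivity), hsqrt]

theorem false_positive_bound (n : ℕ) (rX AX : ℝ) (hr : 0 < rX) (hA : 0 < AX)
    (p : EuclideanSpace ℝ (Fin n) → ℝ≥0∞)
    (μ : Measure (EuclideanSpace ℝ (Fin n)))
    (hμ : μ = volume.withDensity p) [IsProbabilityMeasure μ]
    (hsupp : ∀ x, x ∉ Metric.closedBall (0 : EuclideanSpace ℝ (Fin n)) rX → p x = 0)
    (hbound : ∀ x, p x ≤ ENNReal.ofReal AX /
        volume (Metric.closedBall (0 : EuclideanSpace ℝ (Fin n)) rX))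
    (w : EuclideanSpace ℝ (Fin n)) (hw : ‖w‖ = 1)
    (θ : ℝ) (hθ : θ ∈ Set.Ioo 0 rX) :
    μ {x | ⟪w, x⟫ > θ}
      ≤ ENNReal.ofReal (AX * Real.sqrt (1 - θ ^ 2 / rX ^ 2) ^ n) :=
  false_positive_bound_general n rX AX p μ hμ hsupp hbound w hw θ hθ
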